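/- arXiv:2401.14610 — 3 statements merged into one kernel-verified Lean document; each statement's English description precedes it below -/
import Mathlib

section
/- The Fibonacci-run graph R_n is a partial cube if and only if n ≤ 6. -/
/-- Run-constrained binary strings: every maximal run of `1`s is immediately
followed by a strictly longer run of `0`s. -/
inductive RunConstrained : List Bool → Prop
  | nil : RunConstrained []
  | zero {l : List Bool} : RunConstrained l → RunConstrained (false :: l)
  | block {l : List Bool} (r s : ℕ) (hr : 1 ≤ r) (hs : r < s) :
      RunConstrained l →
      RunConstrained (List.replicate r true ++ List.replicate s false ++ l)

/-- Hamming distance between two binary strings (of the same length). -/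
def hammingD (α β : List Bool) : ℕ := (List.zipWith bne α β).count true

/-- The Fibonacci-run graph `R n`: vertices are strings `r` of length `n` with
`r00` run-constrained; two vertices are adjacent iff they differ in exactly one
coordinate. -/
noncomputable def fibRunGraph (n : ℕ) :
    SimpleGraph {l : List Bool // l.length = n ∧ RunConstrained (l ++ [false, false])} :=
  SimpleGraph.fromRel fun a b => hammingD a.1 b.1 = 1

/-- The hypercube graph `Q m`. -/
noncomputable def cubeGraph (m : ℕ) : SimpleGraph (Fin m → Bool) :=
  SimpleGraph.fromRel fun x y => hammingDist x y = 1

/-- A partial cube: a connected graph admitting an isometric embedding into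
some hypercube. -/
def IsPartialCube {V : Type*} (G : SimpleGraph V) : Prop :=
  G.Connected ∧ ∃ (m : ℕ) (f : V → (Fin m → Bool)),
    ∀ u v : V, (cubeGraph m).dist (f u) (f v) = G.dist u v


namespace Aux

open List

/-! ### hammingD lemmas -/

lemma hamD_nil : hammingD [] [] = 0 := rfl

lemma hamD_cons (x y : Bool) (a b : List Bool) :
    hammingD (x :: a) (y :: b) = (if x ≠ y then 1 else 0) + hammingD a b := by
  simp [hammingD, List.count_cons]
  cases x <;> cases y <;> simp [add_comm]

lemma hamD_comm (a b : List Bool) : hammingD a b = hammingD b a := by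
  induction a generalizing b with
  | nil => cases b <;> rfl
  | cons x a ih =>
    cases b with
    | nil => rfl
    | cons y b => rw [hamD_cons, hamD_cons, ih]; congr 1; cases x <;> cases y <;> simp

lemma hamD_self (a : List Bool) : hammingD a a = 0 := by
  induction a with
  | nil => rfl
  | cons x a ih => rw [hamD_cons]; simp [ih]

lemma hamD_eq_zero {a b : List Bool} (h : a.length = b.length) (h0 : hammingD a b = 0) :
    a = b := by
  induction a generalizing b with
  | nil => cases b with | nil => rfl | cons y b => simp at h
  | cons x a ih =>
    cases b with
    | nil => simp at h
    | cons y b =>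
      rw [hamD_cons] at h0
      by_cases hxy : x = y
      · subst hxy; simp at h0 h ⊢; exact ih h h0
      · simp [hxy] at h0

lemma hamD_triangle_even (a b c : List Bool) (hab : a.length = b.length)
    (hbc : b.length = c.length) :
    hammingD a c ≤ hammingD a b + hammingD b c ∧
      Even (hammingD a b + hammingD b c + hammingD a c) := by
  induction a generalizing b c with
  | nil =>
    cases b with
    | nil => cases c with
      | nil => simp [hamD_nil]
      | cons z c => simp at hbc
    | cons y b => simp at hab
  | cons x a ih =>
    cases b with
    | nil => simp at hab
    | cons y b =>
      cases c with
      | nil => simp at hbc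
      | cons z c =>
        simp only [List.length_cons, Nat.add_right_cancel_iff] at hab hbc
        obtain ⟨h1, h2⟩ := ih b c hab hbc
        rw [hamD_cons, hamD_cons, hamD_cons]
        obtain ⟨k, hk⟩ := h2
        constructor
        · have : (if x ≠ z then 1 else 0) ≤ (if x ≠ y then 1 else 0) + (if y ≠ z then 1 else 0) := by
            cases x <;> cases y <;> cases z <;> simp
          omega
        · have : (if x ≠ y then 1 else 0) + (if y ≠ z then 1 else 0) + (if x ≠ z then 1 else 0) = 0
              ∨ (if x ≠ y then 1 else 0) + (if y ≠ z then 1 else 0) + (if x ≠ z then 1 else 0) = 2 := by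
            cases x <;> cases y <;> cases z <;> simp
          rcases this with h | h <;> [exact ⟨k, by omega⟩; exact ⟨k + 1, by omega⟩]

lemma hamD_append {a c : List Bool} (b d : List Bool) (h : a.length = c.length) :
    hammingD (a ++ b) (c ++ d) = hammingD a c + hammingD b d := by
  induction a generalizing c with
  | nil => cases c with | nil => simp [hammingD] | cons z c => simp at h
  | cons x a ih =>
    cases c with
    | nil => simp at h
    | cons z c =>
      simp only [List.length_cons, Nat.add_right_cancel_iff] at h
      simp only [List.cons_append, hamD_cons, ih h]
      omega

lemma hamD_ne {a b : List Bool} (h : hammingD a b = 1) : a ≠ b := by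
  intro he; subst he; simp [hamD_self] at h

/-! ### RunConstrained lemmas -/

lemma rc_inv {x : List Bool} (h : RunConstrained x) :
    x = [] ∨ (∃ l, x = false :: l ∧ RunConstrained l) ∨
      (∃ r s l, 1 ≤ r ∧ r < s ∧ x = List.replicate r true ++ List.replicate s false ++ l ∧
        RunConstrained l) := by
  cases h with
  | nil => exact Or.inl rfl
  | zero h' => exact Or.inr (Or.inl ⟨_, rfl, h'⟩)
  | block r s hr hs h' => exact Or.inr (Or.inr ⟨r, s, _, hr, hs, rfl, h'⟩)

lemma rc_cons_false {l : List Bool} (h : RunConstrained (false :: l)) : RunConstrained l := by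
  rcases rc_inv h with h1 | ⟨l', he, h'⟩ | ⟨r, s, m, hr, hs, he, h'⟩
  · simp at h1
  · rw [List.cons_eq_cons] at he; exact he.2 ▸ h'
  · obtain ⟨r', rfl⟩ : ∃ r', r = r' + 1 := ⟨r - 1, by omega⟩
    simp [List.replicate_succ] at he

lemma rc_cons_true {l : List Bool} (h : RunConstrained (true :: l)) :
    ∃ r s m, 1 ≤ r ∧ r < s ∧ true :: l = List.replicate r true ++ List.replicate s false ++ m ∧
      RunConstrained m := by
  rcases rc_inv h with h1 | ⟨l', he, h'⟩ | ⟨r, s, m, hr, hs, he, h'⟩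
  · simp at h1
  · simp at he
  · exact ⟨r, s, m, hr, hs, he, h'⟩

lemma rc_repF_iff (k : ℕ) (m : List Bool) :
    RunConstrained (List.replicate k false ++ m) ↔ RunConstrained m := by
  induction k with
  | zero => simp
  | succ k ih =>
    rw [List.replicate_succ, List.cons_append]
    exact ⟨fun h => ih.mp (rc_cons_false h), fun h => RunConstrained.zero (ih.mpr h)⟩

lemma rc_tail {b : Bool} {l : List Bool} (h : RunConstrained (b :: l)) : RunConstrained l := by
  cases b
  · exact rc_cons_false h
  · obtain ⟨r, s, m, hr, hs, he, h'⟩ := rc_cons_true h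
    obtain ⟨r', rfl⟩ : ∃ r', r = r' + 1 := ⟨r - 1, by omega⟩
    simp only [List.replicate_succ, List.cons_append, List.cons.injEq, true_and] at he
    rw [he]
    rcases Nat.eq_zero_or_pos r' with h0 | h0
    · subst h0; simpa [rc_repF_iff] using h'
    · simpa [List.append_assoc] using RunConstrained.block r' s h0 (by omega) h'

lemma rc_append_repF {x : List Bool} (k : ℕ) (h : RunConstrained x) :
    RunConstrained (x ++ List.replicate k false) := by
  induction h with
  | nil =>
    have := (rc_repF_iff k []).mpr RunConstrained.nil
    simpa using this
  | zero _ ih => exact RunConstrained.zero ih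
  | block r s hr hs _ ih =>
    have := RunConstrained.block r s hr hs ih
    simpa [List.append_assoc] using this

lemma ltc_eq (k : ℕ) (x : List Bool) :
    (List.replicate k true ++ false :: x).takeWhile (· == true) = List.replicate k true := by
  induction k with
  | zero => simp [List.takeWhile]
  | succ k ih => simp [List.replicate_succ, List.takeWhile, ih]

lemma rep_true_eq {r r' : ℕ} {x y : List Bool}
    (h : List.replicate r true ++ false :: x = List.replicate r' true ++ false :: y) :
    r = r' ∧ x = y := by
  have h1 := congrArg (fun l => (List.takeWhile (· == true) l).length) h
  simp only [ltc_eq, List.length_replicate] at h1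
  subst h1
  constructor
  · rfl
  · have := List.append_cancel_left h
    simpa using this

lemma nopat2 (x : List Bool) : ¬ RunConstrained (true :: false :: true :: x) := by
  intro h
  obtain ⟨r, s, m, hr, hs, he, h'⟩ := rc_cons_true h
  obtain ⟨s', rfl⟩ : ∃ s', s = s' + 1 := ⟨s - 1, by omega⟩
  rw [List.replicate_succ] at he
  have he' : List.replicate 1 true ++ false :: (true :: x) =
      List.replicate r true ++ false :: (List.replicate s' false ++ m) := by
    simpa using he
  obtain ⟨h1, h2⟩ := rep_true_eq he'
  subst h1
  obtain ⟨s'', rfl⟩ : ∃ s'', s' = s'' + 1 := ⟨s' - 1, by omega⟩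
  rw [List.replicate_succ] at h2
  simp at h2

lemma nopat1 (x : List Bool) : ¬ RunConstrained (true :: true :: false :: true :: x) := by
  intro h
  obtain ⟨r, s, m, hr, hs, he, h'⟩ := rc_cons_true h
  obtain ⟨s', rfl⟩ : ∃ s', s = s' + 1 := ⟨s - 1, by omega⟩
  rw [List.replicate_succ] at he
  have he' : List.replicate 2 true ++ false :: (true :: x) =
      List.replicate r true ++ false :: (List.replicate s' false ++ m) := by
    simpa using he
  obtain ⟨h1, h2⟩ := rep_true_eq he'
  subst h1
  obtain ⟨s'', rfl⟩ : ∃ s'', s' = s'' + 1 := ⟨s' - 1, by omega⟩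
  rw [List.replicate_succ] at h2
  simp at h2

/-- The key structural characterization. -/
lemma rc_key {r : ℕ} (hr : 1 ≤ r) (l : List Bool) :
    RunConstrained (List.replicate r true ++ false :: l) ↔
      (List.replicate r false).IsPrefix l ∧ RunConstrained (l.drop r) := by
  constructor
  · intro h
    obtain ⟨r', rfl⟩ : ∃ r', r = r' + 1 := ⟨r - 1, by omega⟩
    rw [List.replicate_succ, List.cons_append] at h
    obtain ⟨r2, s2, m, hr2, hs2, he, h'⟩ := rc_cons_true h
    obtain ⟨s2', rfl⟩ : ∃ s', s2 = s' + 1 := ⟨s2 - 1, by omega⟩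
    rw [List.replicate_succ (n := s2')] at he
    have he' : List.replicate (r' + 1) true ++ false :: l =
        List.replicate r2 true ++ false :: (List.replicate s2' false ++ m) := by
      rw [List.replicate_succ, List.cons_append]
      simpa using he
    obtain ⟨h1, h2⟩ := rep_true_eq he'
    subst h1
    subst h2
    have hs2' : r' + 1 ≤ s2' := by omega
    obtain ⟨d, hd⟩ : ∃ d, s2' = (r' + 1) + d := ⟨s2' - (r' + 1), by omega⟩
    subst hd
    constructor
    · exact ⟨List.replicate d false ++ m, by
        rw [← List.append_assoc, ← List.replicate_add]⟩
    · rw [List.drop_append_of_le_length (by simp), List.drop_replicate]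
      have hdd : r' + 1 + d - (r' + 1) = d := by omega
      rw [hdd]
      exact (rc_repF_iff d m).mpr h'
  · rintro ⟨⟨t, ht⟩, h2⟩
    subst ht
    rw [List.drop_append_of_le_length (by simp), List.drop_replicate, Nat.sub_self] at h2
    simp at h2
    have : RunConstrained (List.replicate r true ++ List.replicate (r + 1) false ++ t) :=
      RunConstrained.block r (r + 1) hr (by omega) h2
    simpa [List.replicate_succ, List.append_assoc] using this

/-- Fueled run-constrained checker. `none` state: at top level; `some r`: consumed
a run of `r` ones. -/
def mach : ℕ → Option ℕ → List Bool → Bool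
  | _, none, [] => true
  | _, some _, [] => false
  | 0, _, _ :: _ => false
  | f+1, none, false :: l => mach f none l
  | f+1, none, true :: l => mach f (some 1) l
  | f+1, some r, true :: l => mach f (some (r+1)) l
  | f+1, some r, false :: l => (List.replicate r false).isPrefixOf l && mach f none (l.drop r)

lemma rc_rep_true {r : ℕ} (hr : 1 ≤ r) : ¬ RunConstrained (List.replicate r true) := by
  intro h
  obtain ⟨r', rfl⟩ : ∃ r', r = r' + 1 := ⟨r - 1, by omega⟩
  rw [List.replicate_succ] at h
  obtain ⟨r2, s2, m, hr2, hs2, he, h'⟩ := rc_cons_true h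
  have hc := congrArg (fun l => l.count false) he
  simp only [← List.replicate_succ] at hc
  rw [List.count_replicate] at hc
  simp only [List.count_append, List.count_replicate] at hc
  simp at hc
  omega

lemma mach_spec : ∀ f : ℕ,
    (∀ l : List Bool, l.length < f → (mach f none l = true ↔ RunConstrained l)) ∧
    (∀ r l, 1 ≤ r → l.length < f →
      (mach f (some r) l = true ↔ RunConstrained (List.replicate r true ++ l))) := by
  intro f
  induction f with
  | zero =>
    constructor
    · intro l hl; exact absurd hl (Nat.not_lt_zero _)
    · intro r l hr hl; exact absurd hl (Nat.not_lt_zero _)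
  | succ f ih =>
    constructor
    · intro l hl
      match l with
      | [] => simpa [mach] using RunConstrained.nil
      | false :: l' =>
        rw [show mach (f+1) none (false :: l') = mach f none l' from rfl]
        rw [ih.1 l' (by simpa using Nat.lt_of_succ_lt_succ hl)]
        exact ⟨RunConstrained.zero, rc_cons_false⟩
      | true :: l' =>
        rw [show mach (f+1) none (true :: l') = mach f (some 1) l' from rfl]
        rw [ih.2 1 l' le_rfl (by simpa using Nat.lt_of_succ_lt_succ hl)]
        simp
    · intro r l hr hl
      match l with
      | [] =>
        simp only [mach]
        constructor
        · intro h; exact absurd h (by simp)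
        · intro h; exact absurd h (by simpa using rc_rep_true hr)
      | true :: l' =>
        rw [show mach (f+1) (some r) (true :: l') = mach f (some (r+1)) l' from rfl]
        rw [ih.2 (r+1) l' (by omega) (by simpa using Nat.lt_of_succ_lt_succ hl)]
        rw [List.replicate_succ' (n := r)]
        simp [List.append_assoc]
      | false :: l' =>
        rw [show mach (f+1) (some r) (false :: l')
            = ((List.replicate r false).isPrefixOf l' && mach f none (l'.drop r)) from rfl]
        rw [Bool.and_eq_true, List.isPrefixOf_iff_prefix]
        rw [ih.1 (l'.drop r) (by
          have : (l'.drop r).length = l'.length - r := List.length_drop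
          simp only [List.length_cons] at hl
          omega)]
        exact (rc_key hr l').symm
end Aux
def VB (l : List Bool) : Bool := Aux.mach (l.length + 3) none (l ++ [false, false])

lemma VB_iff (l : List Bool) : VB l = true ↔ RunConstrained (l ++ [false, false]) := by
  apply (Aux.mach_spec (l.length + 3)).1
  simp

def allB : ℕ → List (List Bool)
  | 0 => [[]]
  | n+1 => (allB n).flatMap fun l => [true :: l, false :: l]

lemma mem_allB {l : List Bool} {n : ℕ} (h : l.length = n) : l ∈ allB n := by
  induction n generalizing l with
  | zero => simp at h; simp [allB, h]
  | succ n ih =>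
    cases l with
    | nil => simp at h
    | cons b l' =>
      simp only [List.length_cons, Nat.add_right_cancel_iff] at h
      simp only [allB, List.mem_flatMap]
      exact ⟨l', ih h, by cases b <;> simp⟩

lemma allB_length {l : List Bool} {n : ℕ} (h : l ∈ allB n) : l.length = n := by
  induction n generalizing l with
  | zero => simp [allB] at h; simp [h]
  | succ n ih =>
    simp only [allB, List.mem_flatMap] at h
    obtain ⟨a, ha, hm⟩ := h
    simp only [List.mem_cons, List.not_mem_nil, or_false] at hm
    rcases hm with rfl | rfl <;> simp [ih ha]

set_option maxRecDepth 10000 in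
lemma grad6 : ∀ n ∈ [0, 1, 2, 3, 4, 5, 6], ∀ u ∈ allB n, ∀ v ∈ allB n,
    VB u = true → VB v = true → u ≠ v →
    ∃ w ∈ allB n, VB w = true ∧ hammingD u w = 1 ∧ hammingD w v + 1 = hammingD u v := by
  decide

namespace Aux

abbrev Vtx (n : ℕ) := {l : List Bool // l.length = n ∧ RunConstrained (l ++ [false, false])}

lemma adj_iff {n : ℕ} {u v : Vtx n} :
    (fibRunGraph n).Adj u v ↔ u ≠ v ∧ hammingD u.1 v.1 = 1 := by
  rw [fibRunGraph, SimpleGraph.fromRel_adj, hamD_comm v.1 u.1]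
  tauto

lemma adj_of_ham {n : ℕ} {u v : Vtx n} (h : hammingD u.1 v.1 = 1) :
    (fibRunGraph n).Adj u v :=
  adj_iff.mpr ⟨fun he => hamD_ne h (congrArg Subtype.val he), h⟩

lemma walk_bound {n : ℕ} {u v : Vtx n} (p : (fibRunGraph n).Walk u v) :
    hammingD u.1 v.1 ≤ p.length ∧ (hammingD u.1 v.1 + p.length) % 2 = 0 := by
  induction p with
  | nil => simp [hamD_self]
  | cons h q ih =>
    rename_i a b c
    obtain ⟨hne, h1⟩ := adj_iff.mp h
    obtain ⟨ht, he⟩ := hamD_triangle_even a.1 b.1 c.1 (a.2.1.trans b.2.1.symm)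
      (b.2.1.trans c.2.1.symm)
    rw [Nat.even_iff] at he
    obtain ⟨hle, he2⟩ := ih
    rw [SimpleGraph.Walk.length_cons]
    omega

lemma exists_first_true {l : List Bool} (h : true ∈ l) :
    ∃ a z, l = List.replicate a false ++ true :: z := by
  induction l with
  | nil => simp at h
  | cons b l ih =>
    cases b
    · simp at h
      obtain ⟨a, z, hz⟩ := ih h
      exact ⟨a + 1, z, by rw [List.replicate_succ, List.cons_append, hz]⟩
    · exact ⟨0, l, rfl⟩

lemma zeroVtx_mem (n : ℕ) : (List.replicate n false).length = n ∧
    RunConstrained (List.replicate n false ++ [false, false]) := by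
  refine ⟨by simp, ?_⟩
  have h2 : ([false, false] : List Bool) = List.replicate 2 false ++ [] := by rfl
  rw [h2, ← List.append_assoc, ← List.replicate_add]
  exact (rc_repF_iff _ _).mpr RunConstrained.nil

lemma reach_zero {n : ℕ} (u : Vtx n) :
    (fibRunGraph n).Reachable u ⟨List.replicate n false, zeroVtx_mem n⟩ := by
  generalize hc : u.1.count true = c
  induction c using Nat.strong_induction_on generalizing u with
  | _ c ih =>
    by_cases h : true ∈ u.1
    · obtain ⟨a, z, hz⟩ := exists_first_true h
      have hrc : RunConstrained (u.1 ++ [false, false]) := u.2.2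
      rw [hz, List.append_assoc] at hrc
      have h1 : RunConstrained (true :: (z ++ [false, false])) := (rc_repF_iff _ _).mp hrc
      have h2 : RunConstrained (z ++ [false, false]) := rc_tail h1
      have hwlen : (List.replicate a false ++ false :: z).length = n := by
        have hu := u.2.1
        rw [hz] at hu
        simpa using hu
      have hwrc : RunConstrained ((List.replicate a false ++ false :: z) ++ [false, false]) := by
        rw [List.append_assoc]
        exact (rc_repF_iff _ _).mpr (RunConstrained.zero h2)
      set W : Vtx n := ⟨List.replicate a false ++ false :: z, hwlen, hwrc⟩ with hW
      have hham : hammingD u.1 W.1 = 1 := by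
        rw [hz, hW, hamD_append _ _ (by rfl), hamD_self, hamD_cons, hamD_self]
        simp
      have hcnt : W.1.count true < c := by
        have hu : u.1.count true = c := hc
        rw [hz] at hu
        simp only [hW, List.count_append, List.count_cons, List.count_replicate] at hu ⊢
        simp at hu ⊢
        omega
      exact ((adj_of_ham hham).reachable).trans (ih _ hcnt W rfl)
    · have hrep : u.1 = List.replicate n false := by
        have hlen := u.2.1
        have hall : ∀ b ∈ u.1, b = false := by
          intro b hb
          cases b
          · rfl
          · exact absurd hb h
        calc u.1 = List.replicate u.1.length false := List.eq_replicate_of_mem hall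
          _ = _ := by rw [hlen]
      exact (Subtype.ext hrep : u = ⟨_, zeroVtx_mem n⟩) ▸ SimpleGraph.Reachable.refl _

lemma fib_connected (n : ℕ) : (fibRunGraph n).Connected := by
  rw [SimpleGraph.connected_iff]
  refine ⟨fun u v => (reach_zero u).trans (reach_zero v).symm, ⟨⟨_, zeroVtx_mem n⟩⟩⟩

lemma dist_lb {n : ℕ} (u v : Vtx n) :
    hammingD u.1 v.1 ≤ (fibRunGraph n).dist u v ∧
      (hammingD u.1 v.1 + (fibRunGraph n).dist u v) % 2 = 0 := by
  obtain ⟨p, hp⟩ := ((fib_connected n).preconnected u v).exists_walk_length_eq_dist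
  rw [← hp]
  exact walk_bound p

/-! ### cube lemmas -/

lemma cube_adj {m : ℕ} {x y : Fin m → Bool} :
    (cubeGraph m).Adj x y ↔ x ≠ y ∧ hammingDist x y = 1 := by
  rw [cubeGraph, SimpleGraph.fromRel_adj, hammingDist_comm y x]
  tauto

lemma cube_exists_walk {m : ℕ} : ∀ (k : ℕ) (x y : Fin m → Bool), hammingDist x y = k →
    ∃ p : (cubeGraph m).Walk x y, p.length = k := by
  intro k
  induction k with
  | zero =>
    intro x y h
    rw [hammingDist_eq_zero] at h
    exact h ▸ ⟨SimpleGraph.Walk.nil, rfl⟩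
  | succ k ih =>
    intro x y h
    have hne : (Finset.univ.filter fun i => x i ≠ y i).Nonempty := by
      rw [← Finset.card_pos, ← hammingDist, h]; omega
    obtain ⟨i, hi⟩ := hne
    rw [Finset.mem_filter] at hi
    set x' : Fin m → Bool := Function.update x i (y i) with hx'
    have hfilter : (Finset.univ.filter fun j => x' j ≠ y j)
        = (Finset.univ.filter fun j => x j ≠ y j).erase i := by
      ext j
      rcases eq_or_ne j i with rfl | hj
      · simp [hx', Function.update_self]
      · simp [hx', Function.update_of_ne hj]
        tauto
    have hx'y : hammingDist x' y = k := by
      rw [hammingDist, hfilter, Finset.card_erase_of_mem (by simp [hi.2]), ← hammingDist, h]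
      omega
    obtain ⟨p, hp⟩ := ih x' y hx'y
    have hadj : (cubeGraph m).Adj x x' := by
      rw [cube_adj]
      constructor
      · intro he
        exact hi.2 (by rw [he]; simp [hx', Function.update_self])
      · rw [hammingDist]
        have : (Finset.univ.filter fun j => x j ≠ x' j) = {i} := by
          ext j
          rcases eq_or_ne j i with rfl | hj
          · simp [hx', Function.update_self, hi.2]
          · simp [hx', Function.update_of_ne hj]
            tauto
        rw [this, Finset.card_singleton]
    exact ⟨SimpleGraph.Walk.cons hadj p, by simp [hp]⟩

lemma cube_walk_lb {m : ℕ} {x y : Fin m → Bool} (p : (cubeGraph m).Walk x y) :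
    hammingDist x y ≤ p.length := by
  induction p with
  | nil => simp
  | cons h q ih =>
    rename_i a b c
    obtain ⟨_, h1⟩ := cube_adj.mp h
    calc hammingDist a c ≤ hammingDist a b + hammingDist b c := hammingDist_triangle a b c
    _ ≤ 1 + q.length := by omega
    _ = (SimpleGraph.Walk.cons h q).length := by simp [add_comm]

lemma cube_dist_eq {m : ℕ} (x y : Fin m → Bool) :
    (cubeGraph m).dist x y = hammingDist x y := by
  obtain ⟨p, hp⟩ := cube_exists_walk (hammingDist x y) x y rfl
  refine le_antisymm (hp ▸ SimpleGraph.dist_le p) ?_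
  obtain ⟨q, hq⟩ := p.reachable.exists_walk_length_eq_dist
  rw [← hq]
  exact cube_walk_lb q

/-! ### embedding lists as functions -/

def embed (n : ℕ) (l : List Bool) : Fin n → Bool := fun i => l.getD i.1 false

lemma embed_ham : ∀ (n : ℕ) (a b : List Bool), a.length = n → b.length = n →
    hammingDist (embed n a) (embed n b) = hammingD a b := by
  intro n
  induction n with
  | zero =>
    intro a b ha hb
    rw [List.length_eq_zero_iff] at ha hb
    subst ha; subst hb
    rw [hammingDist_eq_zero.mpr rfl]
    rfl
  | succ m ih =>
    intro a b ha hb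
    cases a with
    | nil => simp at ha
    | cons x a' =>
      cases b with
      | nil => simp at hb
      | cons y b' =>
        simp only [List.length_cons, Nat.add_right_cancel_iff] at ha hb
        have key : hammingDist (embed (m+1) (x::a')) (embed (m+1) (y::b'))
            = (if x ≠ y then 1 else 0) + hammingDist (embed m a') (embed m b') := by
          show (Finset.univ.filter fun i : Fin (m+1) =>
              embed (m+1) (x::a') i ≠ embed (m+1) (y::b') i).card = _
          rw [Finset.card_filter, Fin.sum_univ_succ]
          congr 1
          rw [show hammingDist (embed m a') (embed m b')
              = (Finset.univ.filter fun i : Fin m => embed m a' i ≠ embed m b' i).card from rfl,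
            Finset.card_filter]
          rfl
        rw [key, hamD_cons, ih a' b' ha hb]

end Aux
namespace Aux

/-! ### positive direction -/

lemma exists_walk6 {n : ℕ} (h6 : n ≤ 6) : ∀ (k : ℕ) (u v : Vtx n),
    hammingD u.1 v.1 = k → ∃ p : (fibRunGraph n).Walk u v, p.length = k := by
  intro k
  induction k with
  | zero =>
    intro u v h
    have : u = v := Subtype.ext (hamD_eq_zero (u.2.1.trans v.2.1.symm) h)
    exact this ▸ ⟨SimpleGraph.Walk.nil, rfl⟩
  | succ k ih =>
    intro u v h
    have hne : u.1 ≠ v.1 := by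
      intro he
      rw [he, hamD_self] at h
      omega
    have hn7 : n ∈ [0, 1, 2, 3, 4, 5, 6] := by interval_cases n <;> simp
    obtain ⟨w, hw, hVB, h1, h2⟩ := grad6 n hn7 u.1 (mem_allB u.2.1) v.1 (mem_allB v.2.1)
      ((VB_iff _).mpr u.2.2) ((VB_iff _).mpr v.2.2) hne
    set W : Vtx n := ⟨w, allB_length hw, (VB_iff w).mp hVB⟩ with hW
    obtain ⟨q, hq⟩ := ih W v (show hammingD w v.1 = k by omega)
    exact ⟨SimpleGraph.Walk.cons (adj_of_ham h1) q, by simp [hq]⟩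

lemma dist_eq6 {n : ℕ} (h6 : n ≤ 6) (u v : Vtx n) :
    (fibRunGraph n).dist u v = hammingD u.1 v.1 := by
  obtain ⟨p, hp⟩ := exists_walk6 h6 (hammingD u.1 v.1) u v rfl
  exact le_antisymm (hp ▸ SimpleGraph.dist_le p) (dist_lb u v).1

lemma positive {n : ℕ} (h6 : n ≤ 6) : IsPartialCube (fibRunGraph n) := by
  refine ⟨fib_connected n, n, fun u => embed n u.1, fun u v => ?_⟩
  rw [cube_dist_eq, embed_ham n u.1 v.1 u.2.1 v.2.1, dist_eq6 h6]

/-! ### theta machinery -/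

lemma hd_one_flip {m : ℕ} {X Y : Fin m → Bool} (h : hammingDist X Y = 1) :
    ∃ i, Y i = !(X i) ∧ ∀ k, k ≠ i → Y k = X k := by
  rw [hammingDist] at h
  obtain ⟨i, hi⟩ := Finset.card_eq_one.mp h
  refine ⟨i, ?_, ?_⟩
  · have : i ∈ Finset.univ.filter fun j => X j ≠ Y j := by rw [hi]; simp
    rw [Finset.mem_filter] at this
    revert this
    cases X i <;> cases Y i <;> simp
  · intro k hk
    by_contra hne
    have : k ∈ Finset.univ.filter fun j => X j ≠ Y j := by
      simp only [Finset.mem_filter, Finset.mem_univ, true_and]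
      exact fun he => hne he.symm
    rw [hi, Finset.mem_singleton] at this
    exact hk this

lemma theta_trans {m : ℕ} {X Y U V : Fin m → Bool} {i j : Fin m}
    (hY : ∀ k, k ≠ i → Y k = X k) (hV : ∀ k, k ≠ j → V k = U k) (hij : i ≠ j) :
    hammingDist X U + hammingDist Y V = hammingDist X V + hammingDist Y U := by
  rw [hammingDist, hammingDist, hammingDist, hammingDist, Finset.card_filter,
    Finset.card_filter, Finset.card_filter, Finset.card_filter, ← Finset.sum_add_distrib,
    ← Finset.sum_add_distrib]
  apply Finset.sum_congr rfl
  intro k _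
  rcases eq_or_ne k i with rfl | hki
  · rw [hV k hij]
  · rcases eq_or_ne k j with rfl | hkj
    · rw [hY k hki]
      omega
    · rw [hY k hki, hV k hkj]

lemma theta_same {m : ℕ} {X Y U V : Fin m → Bool} {i : Fin m}
    (hY0 : Y i = !(X i)) (hY : ∀ k, k ≠ i → Y k = X k)
    (hV0 : V i = !(U i)) (hV : ∀ k, k ≠ i → V k = U k) :
    hammingDist X U + hammingDist Y V ≠ hammingDist X V + hammingDist Y U := by
  rw [hammingDist, hammingDist, hammingDist, hammingDist, Finset.card_filter,
    Finset.card_filter, Finset.card_filter, Finset.card_filter, ← Finset.sum_add_distrib,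
    ← Finset.sum_add_distrib]
  rw [← Finset.sum_erase_add _ _ (Finset.mem_univ i), ← Finset.sum_erase_add _ _
    (Finset.mem_univ i)]
  have hsame : ∑ k ∈ Finset.univ.erase i,
      ((if X k ≠ U k then 1 else 0) + if Y k ≠ V k then 1 else 0)
      = ∑ k ∈ Finset.univ.erase i,
      ((if X k ≠ V k then 1 else 0) + if Y k ≠ U k then 1 else 0) := by
    apply Finset.sum_congr rfl
    intro k hk
    have hki : k ≠ i := (Finset.mem_erase.mp hk).1
    rw [hY k hki, hV k hki]
  rw [hsame]
  intro hEq
  have h2 := Nat.add_left_cancel hEq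
  rw [hY0, hV0] at h2
  revert h2
  cases X i <;> cases U i <;> decide

/-! ### negative direction -/

lemma list_len4 {l : List Bool} (h : l.length = 4) : ∃ a b c d, l = [a, b, c, d] := by
  rcases l with _ | ⟨a, l⟩; · simp at h
  rcases l with _ | ⟨b, l⟩; · simp at h
  rcases l with _ | ⟨c, l⟩; · simp at h
  rcases l with _ | ⟨d, l⟩; · simp at h
  rcases l with _ | ⟨e, l⟩
  · exact ⟨a, b, c, d, rfl⟩
  · simp at h

def pad (n : ℕ) (s : List Bool) : List Bool := s ++ List.replicate (n - 7) false

lemma pad_mem (n : ℕ) (hn : 7 ≤ n) (s : List Bool) (h7 : s.length = 7)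
    (hv : VB s = true) : (pad n s).length = n ∧ RunConstrained (pad n s ++ [false, false]) := by
  constructor
  · rw [pad, List.length_append, List.length_replicate, h7]; omega
  · have hrc : RunConstrained (s ++ [false, false]) := (VB_iff s).mp hv
    have h1 : pad n s ++ [false, false] = (s ++ [false, false]) ++ List.replicate (n - 7) false
        → True := fun _ => trivial
    have key : pad n s ++ [false, false] = s ++ List.replicate (n - 7 + 2) false := by
      rw [pad, List.append_assoc]
      congr 1
      rw [List.replicate_add]
      rfl
    rw [key]
    have h2 := rc_append_repF (n - 7) hrc
    rw [List.append_assoc] at h2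
    have h3 : ([false, false] : List Bool) ++ List.replicate (n - 7) false
        = List.replicate (n - 7 + 2) false := by
      rw [show n - 7 + 2 = 2 + (n - 7) by omega, List.replicate_add]
      rfl
    rwa [h3] at h2

def mkV (n : ℕ) (hn : 7 ≤ n) (s : List Bool) (h7 : s.length = 7) (hv : VB s = true) :
    Vtx n := ⟨pad n s, pad_mem n hn s h7 hv⟩

lemma pad_ham (n : ℕ) (s t : List Bool) (h7 : s.length = t.length) :
    hammingD (pad n s) (pad n t) = hammingD s t := by
  rw [pad, pad, hamD_append _ _ h7, hamD_self]
  omega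

lemma mk_adj {n : ℕ} {hn : 7 ≤ n} {s t : List Bool} {h7s h7t hvs hvt}
    (h : hammingD s t = 1) :
    (fibRunGraph n).Adj (mkV n hn s h7s hvs) (mkV n hn t h7t hvt) :=
  adj_of_ham (by rw [show (mkV n hn s h7s hvs).1 = pad n s from rfl,
    show (mkV n hn t h7t hvt).1 = pad n t from rfl, pad_ham n s t (h7s.trans h7t.symm), h])

lemma mk_dist_eq {n : ℕ} {hn : 7 ≤ n} {s t : List Bool} {h7s h7t hvs hvt} (k : ℕ)
    (hk : hammingD s t = k)
    (p : (fibRunGraph n).Walk (mkV n hn s h7s hvs) (mkV n hn t h7t hvt))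
    (hp : p.length = k) :
    (fibRunGraph n).dist (mkV n hn s h7s hvs) (mkV n hn t h7t hvt) = k := by
  refine le_antisymm (hp ▸ SimpleGraph.dist_le p) ?_
  have h := (dist_lb (mkV n hn s h7s hvs) (mkV n hn t h7t hvt)).1
  rwa [show (mkV n hn s h7s hvs).1 = pad n s from rfl,
    show (mkV n hn t h7t hvt).1 = pad n t from rfl,
    pad_ham n s t (h7s.trans h7t.symm), hk] at h

end Aux
namespace Aux

section Neg

variable (n : ℕ) (hn : 7 ≤ n)

def sA0 : List Bool := [false,false,false,false,false,false,false]
def sA1 : List Bool := [false,false,false,true,false,false,false]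
def sB0 : List Bool := [true,false,false,false,false,false,false]
def sB1 : List Bool := [true,false,false,true,false,false,false]
def sC0 : List Bool := [false,true,true,true,false,false,false]
def sC1 : List Bool := [true,true,true,true,false,false,false]
def sG1 : List Bool := [true,true,false,false,false,false,false]
def sG2 : List Bool := [true,true,true,false,false,false,false]
def sH1 : List Bool := [false,false,true,true,false,false,false]

def vA0 : Vtx n := mkV n hn sA0 rfl (by decide)
def vA1 : Vtx n := mkV n hn sA1 rfl (by decide)
def vB0 : Vtx n := mkV n hn sB0 rfl (by decide)
def vB1 : Vtx n := mkV n hn sB1 rfl (by decide)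
def vC0 : Vtx n := mkV n hn sC0 rfl (by decide)
def vC1 : Vtx n := mkV n hn sC1 rfl (by decide)
def vG1 : Vtx n := mkV n hn sG1 rfl (by decide)
def vG2 : Vtx n := mkV n hn sG2 rfl (by decide)
def vH1 : Vtx n := mkV n hn sH1 rfl (by decide)

lemma mk_dist_lb {n : ℕ} {hn : 7 ≤ n} {s t : List Bool} {h7s h7t hvs hvt} (k : ℕ)
    (hk : hammingD s t = k) :
    k ≤ (fibRunGraph n).dist (mkV n hn s h7s hvs) (mkV n hn t h7t hvt) := by
  have h := (dist_lb (mkV n hn s h7s hvs) (mkV n hn t h7t hvt)).1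
  rwa [show (mkV n hn s h7s hvs).1 = pad n s from rfl,
    show (mkV n hn t h7t hvt).1 = pad n t from rfl,
    pad_ham n s t (h7s.trans h7t.symm), hk] at h

lemma dA0A1 : (fibRunGraph n).dist (vA0 n hn) (vA1 n hn) = 1 :=
  mk_dist_eq 1 (by decide) (.cons (mk_adj (by decide)) .nil) (by simp)
lemma dA1A0 : (fibRunGraph n).dist (vA1 n hn) (vA0 n hn) = 1 :=
  mk_dist_eq 1 (by decide) (.cons (mk_adj (by decide)) .nil) (by simp)
lemma dB0B1 : (fibRunGraph n).dist (vB0 n hn) (vB1 n hn) = 1 :=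
  mk_dist_eq 1 (by decide) (.cons (mk_adj (by decide)) .nil) (by simp)
lemma dC0C1 : (fibRunGraph n).dist (vC0 n hn) (vC1 n hn) = 1 :=
  mk_dist_eq 1 (by decide) (.cons (mk_adj (by decide)) .nil) (by simp)
lemma dA0B0 : (fibRunGraph n).dist (vA0 n hn) (vB0 n hn) = 1 :=
  mk_dist_eq 1 (by decide) (.cons (mk_adj (by decide)) .nil) (by simp)
lemma dA1B1 : (fibRunGraph n).dist (vA1 n hn) (vB1 n hn) = 1 :=
  mk_dist_eq 1 (by decide) (.cons (mk_adj (by decide)) .nil) (by simp)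
lemma dA0B1 : (fibRunGraph n).dist (vA0 n hn) (vB1 n hn) = 2 :=
  mk_dist_eq 2 (by decide)
    (.cons (mk_adj (t := sA1) (h7t := rfl) (hvt := by decide) (by decide))
      (.cons (mk_adj (by decide)) .nil)) (by simp)
lemma dA1B0 : (fibRunGraph n).dist (vA1 n hn) (vB0 n hn) = 2 :=
  mk_dist_eq 2 (by decide)
    (.cons (mk_adj (t := sA0) (h7t := rfl) (hvt := by decide) (by decide))
      (.cons (mk_adj (by decide)) .nil)) (by simp)
lemma dB0C1 : (fibRunGraph n).dist (vB0 n hn) (vC1 n hn) = 3 :=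
  mk_dist_eq 3 (by decide)
    (.cons (mk_adj (t := sG1) (h7t := rfl) (hvt := by decide) (by decide))
      (.cons (mk_adj (t := sG2) (h7t := rfl) (hvt := by decide) (by decide))
        (.cons (mk_adj (by decide)) .nil))) (by simp)
lemma dB1C0 : (fibRunGraph n).dist (vB1 n hn) (vC0 n hn) = 3 :=
  mk_dist_eq 3 (by decide)
    (.cons (mk_adj (t := sA1) (h7t := rfl) (hvt := by decide) (by decide))
      (.cons (mk_adj (t := sH1) (h7t := rfl) (hvt := by decide) (by decide))
        (.cons (mk_adj (by decide)) .nil))) (by simp)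
lemma dC0A0 : (fibRunGraph n).dist (vC0 n hn) (vA0 n hn) = 3 :=
  mk_dist_eq 3 (by decide)
    (.cons (mk_adj (t := sH1) (h7t := rfl) (hvt := by decide) (by decide))
      (.cons (mk_adj (t := sA1) (h7t := rfl) (hvt := by decide) (by decide))
        (.cons (mk_adj (by decide)) .nil))) (by simp)
lemma dC1B0 : (fibRunGraph n).dist (vC1 n hn) (vB0 n hn) = 3 :=
  mk_dist_eq 3 (by decide)
    (.cons (mk_adj (t := sG2) (h7t := rfl) (hvt := by decide) (by decide))
      (.cons (mk_adj (t := sG1) (h7t := rfl) (hvt := by decide) (by decide))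
        (.cons (mk_adj (by decide)) .nil))) (by simp)
lemma dC0B0 : (fibRunGraph n).dist (vC0 n hn) (vB0 n hn) = 4 :=
  mk_dist_eq 4 (by decide)
    (.cons (mk_adj (t := sH1) (h7t := rfl) (hvt := by decide) (by decide))
      (.cons (mk_adj (t := sA1) (h7t := rfl) (hvt := by decide) (by decide))
        (.cons (mk_adj (t := sA0) (h7t := rfl) (hvt := by decide) (by decide))
          (.cons (mk_adj (by decide)) .nil)))) (by simp)
lemma dC1A0 : (fibRunGraph n).dist (vC1 n hn) (vA0 n hn) = 4 :=
  mk_dist_eq 4 (by decide)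
    (.cons (mk_adj (t := sC0) (h7t := rfl) (hvt := by decide) (by decide))
      (.cons (mk_adj (t := sH1) (h7t := rfl) (hvt := by decide) (by decide))
        (.cons (mk_adj (t := sA1) (h7t := rfl) (hvt := by decide) (by decide))
          (.cons (mk_adj (by decide)) .nil)))) (by simp)

lemma dB1C1_lb : 4 ≤ (fibRunGraph n).dist (vB1 n hn) (vC1 n hn) := by
  have hham : hammingD (vB1 n hn).1 (vC1 n hn).1 = 2 := by
    rw [show (vB1 n hn).1 = pad n sB1 from rfl, show (vC1 n hn).1 = pad n sC1 from rfl,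
      pad_ham n sB1 sC1 rfl]
    decide
  obtain ⟨hlb, hpar⟩ := dist_lb (vB1 n hn) (vC1 n hn)
  rw [hham] at hlb hpar
  suffices h2 : (fibRunGraph n).dist (vB1 n hn) (vC1 n hn) ≠ 2 by omega
  intro hd2
  obtain ⟨p, hp⟩ := ((fib_connected n).preconnected (vB1 n hn) (vC1 n hn)).exists_walk_length_eq_dist
  rw [hd2] at hp
  cases p with
  | cons h q =>
    rename_i W
    cases q with
    | nil => simp at hp
    | cons h2 q2 =>
      rename_i W2
      have hq2 : q2.length = 0 := by simpa using hp
      have hW2 := SimpleGraph.Walk.eq_of_length_eq_zero hq2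
      subst hW2
      have h1 : hammingD (vB1 n hn).1 W.1 = 1 := (adj_iff.mp h).2
      have h2' : hammingD W.1 (vC1 n hn).1 = 1 := (adj_iff.mp h2).2
      have hWlen : W.1.length = n := W.2.1
      have hsplit : W.1 = W.1.take 4 ++ W.1.drop 4 := (List.take_append_drop 4 W.1).symm
      have hw4 : (W.1.take 4).length = 4 := by rw [List.length_take]; omega
      have hw' : (W.1.drop 4).length = n - 4 := by rw [List.length_drop, hWlen]
      have hB1' : (vB1 n hn).1 = [true,false,false,true] ++ List.replicate (n-4) false := by
        show pad n sB1 = _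
        rw [pad, show sB1 = [true,false,false,true] ++ List.replicate 3 false from rfl,
          List.append_assoc, ← List.replicate_add, show 3 + (n - 7) = n - 4 by omega]
      have hC1' : (vC1 n hn).1 = [true,true,true,true] ++ List.replicate (n-4) false := by
        show pad n sC1 = _
        rw [pad, show sC1 = [true,true,true,true] ++ List.replicate 3 false from rfl,
          List.append_assoc, ← List.replicate_add, show 3 + (n - 7) = n - 4 by omega]
      rw [hB1', hsplit, hamD_append _ _ (by rw [hw4]; rfl)] at h1
      rw [hsplit, hC1', hamD_append _ _ (by rw [hw4]; rfl)] at h2'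
      have htr := (hamD_triangle_even [true,false,false,true] (W.1.take 4) [true,true,true,true]
        (by rw [hw4]; rfl) (by rw [hw4]; rfl)).1
      have htfft : hammingD [true,false,false,true] [true,true,true,true] = 2 := by decide
      rw [htfft] at htr
      have hcomm := hamD_comm (List.replicate (n-4) false) (W.1.drop 4)
      have hz : hammingD (List.replicate (n-4) false) (W.1.drop 4) = 0 := by omega
      have hx : hammingD [true,false,false,true] (W.1.take 4) = 1 := by omega
      have hy : hammingD (W.1.take 4) [true,true,true,true] = 1 := by omega
      have hw'eq : W.1.drop 4 = List.replicate (n-4) false :=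
        (hamD_eq_zero (by rw [List.length_replicate, hw']) hz).symm
      obtain ⟨a, b, c, d, habcd⟩ := list_len4 hw4
      rw [habcd] at hx hy
      have hcases : [a,b,c,d] = [true,true,false,true] ∨ [a,b,c,d] = [true,false,true,true] := by
        revert hx hy
        cases a <;> cases b <;> cases c <;> cases d <;> decide
      have hrc : RunConstrained (W.1 ++ [false, false]) := W.2.2
      rw [hsplit, habcd, hw'eq] at hrc
      rcases hcases with h4 | h4 <;> rw [h4] at hrc
      · exact nopat1 _ (by simpa [List.append_assoc] using hrc)
      · exact nopat2 _ (by simpa [List.append_assoc] using hrc)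

lemma negative (hn : 7 ≤ n) : ¬ IsPartialCube (fibRunGraph n) := by
  rintro ⟨hconn, m, F, hF⟩
  have key : ∀ p q : Vtx n, hammingDist (F p) (F q) = (fibRunGraph n).dist p q := by
    intro p q
    rw [← hF p q, cube_dist_eq]
  have f1 : hammingDist (F (vA0 n hn)) (F (vA1 n hn)) = 1 := by rw [key, dA0A1]
  have f2 : hammingDist (F (vB0 n hn)) (F (vB1 n hn)) = 1 := by rw [key, dB0B1]
  have f3 : hammingDist (F (vC0 n hn)) (F (vC1 n hn)) = 1 := by rw [key, dC0C1]
  have f4 : hammingDist (F (vA0 n hn)) (F (vB0 n hn)) = 1 := by rw [key, dA0B0]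
  obtain ⟨i1, hi1a, hi1b⟩ := hd_one_flip f1
  obtain ⟨i2, hi2a, hi2b⟩ := hd_one_flip f2
  obtain ⟨i3, hi3a, hi3b⟩ := hd_one_flip f3
  obtain ⟨i4, hi4a, hi4b⟩ := hd_one_flip f4
  have h12 : i1 = i2 := by
    by_contra hne
    have ht := theta_trans hi1b hi2b hne
    rw [key _ (vB0 n hn), key _ (vB1 n hn), key _ (vB1 n hn), key _ (vB0 n hn),
      dA0B0, dA1B1, dA0B1, dA1B0] at ht
    omega
  have h23 : i2 = i3 := by
    by_contra hne
    have ht := theta_trans hi2b hi3b hne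
    rw [key _ (vC0 n hn), key _ (vC1 n hn), key _ (vC1 n hn), key _ (vC0 n hn),
      dB0C1, dB1C0] at ht
    have l1 : 4 ≤ (fibRunGraph n).dist (vB0 n hn) (vC0 n hn) := mk_dist_lb 4 (by decide)
    have l2 := dB1C1_lb n hn
    omega
  have h34 : i3 = i4 := by
    by_contra hne
    have ht := theta_trans hi3b hi4b hne
    rw [key _ (vA0 n hn), key _ (vB0 n hn), key _ (vB0 n hn), key _ (vA0 n hn),
      dC0A0, dC1B0, dC0B0, dC1A0] at ht
    omega
  have h14 : i1 = i4 := (h12.trans h23).trans h34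
  subst h14
  have hcontra := theta_same hi1a hi1b hi4a hi4b
  rw [hammingDist_self, key _ (vB0 n hn), key _ (vB0 n hn), key _ (vA0 n hn),
    dA1B0, dA0B0, dA1A0] at hcontra
  omega

end Neg

end Aux


theorem stmt_10 (n : ℕ) : IsPartialCube (fibRunGraph n) ↔ n ≤ 6 := by
  constructor
  · intro h
    by_contra h6
    exact Aux.negative n (by omega) h
  · exact Aux.positive
end

section
/- For every integer p ≥ 0 and every n with 2p² + 3p ≤ n ≤ 2p² + 7p + 4, the diameter of the Fibonacci-run graph R_n satisfies diam(R_n) ≥ n − p. -/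
namespace FibRunAux

open List

/-! ### Basic run-constraint lemmas -/

lemma rc_zeros : ∀ (k : ℕ) {t : List Bool}, RunConstrained t →
    RunConstrained (replicate k false ++ t)
  | 0, t, h => by simpa using h
  | k+1, t, h => by
      simpa [List.replicate_succ] using RunConstrained.zero (rc_zeros k h)

lemma rc_block' {t : List Bool} (r s : ℕ) (hs : r < s) (h : RunConstrained t) :
    RunConstrained (replicate r true ++ (replicate s false ++ t)) := by
  rcases Nat.eq_zero_or_pos r with hr | hr
  · subst hr; simpa using rc_zeros s h
  · simpa [List.append_assoc] using RunConstrained.block r s hr hs h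

lemma rc_drop {m : List Bool} (h : RunConstrained m) : ∀ d, RunConstrained (m.drop d) := by
  induction h with
  | nil => intro d; simpa using RunConstrained.nil
  | @zero l h ih =>
      intro d
      cases d with
      | zero => exact RunConstrained.zero h
      | succ d => simpa using ih d
  | @block l r s hr hs h ih =>
      intro d
      rw [List.append_assoc, List.drop_append,
        List.drop_append, List.drop_replicate, List.drop_replicate,
        List.length_replicate, List.length_replicate]
      rcases lt_or_ge d r with hd | hd
      · have h1 : d - r = 0 := by omega
        simp only [h1, Nat.sub_zero, Nat.zero_sub, List.drop_zero]
        exact rc_block' (r - d) s (by omega) h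
      · have h1 : r - d = 0 := by omega
        simp only [h1, List.replicate_zero, List.nil_append]
        exact rc_zeros (s - (d - r)) (ih (d - r - s))

/-! ### Hamming distance lemmas -/

lemma zipbne_self : ∀ l : List Bool, List.zipWith bne l l = replicate l.length false
  | [] => rfl
  | x :: t => by simp [zipbne_self t, List.replicate_succ]

lemma zipbne_not : ∀ l : List Bool, List.zipWith bne l (l.map (!·)) = replicate l.length true
  | [] => rfl
  | x :: t => by cases x <;> simp [zipbne_not t, List.replicate_succ]

lemma ham_self (l : List Bool) : hammingD l l = 0 := by
  simp [hammingD, zipbne_self, List.count_replicate]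

lemma ham_comm (a b : List Bool) : hammingD a b = hammingD b a := by
  unfold hammingD
  rw [List.zipWith_comm_of_comm (by decide)]

lemma ham_triangle : ∀ (a b c : List Bool), a.length = b.length → b.length = c.length →
    hammingD a c ≤ hammingD a b + hammingD b c
  | [], [], [], _, _ => by simp [hammingD]
  | x :: a, y :: b, z :: c, h1, h2 => by
      have := ham_triangle a b c (by simpa using h1) (by simpa using h2)
      simp only [hammingD, List.zipWith_cons_cons, List.count_cons] at *
      cases x <;> cases y <;> cases z <;> simp at * <;> omega

lemma ham_set : ∀ (l : List Bool) (i : ℕ), i < l.length → l.getD i false = true →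
    hammingD l (l.set i false) = 1 ∧ (l.set i false).count true + 1 = l.count true
  | [], i, h, _ => by simp at h
  | x :: t, 0, _, hx => by
      simp at hx; subst hx
      simp [hammingD, List.zipWith_cons_cons, List.count_cons, zipbne_self,
        List.count_replicate]
  | x :: t, i+1, h, hx => by
      have := ham_set t i (by simpa using h) (by simpa using hx)
      simp only [List.set_cons_succ, hammingD, List.zipWith_cons_cons, List.count_cons] at *
      cases x <;> simp <;> omega

/-! ### Vertices and connectivity -/

variable {n : ℕ}

abbrev Vtx (n : ℕ) := {l : List Bool // l.length = n ∧ RunConstrained (l ++ [false, false])}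

lemma rc_ff : RunConstrained [false, false] :=
  RunConstrained.zero (RunConstrained.zero RunConstrained.nil)

def zeroV (n : ℕ) : Vtx n :=
  ⟨replicate n false, by simp, by simpa using rc_zeros n rc_ff⟩

instance : Finite (Vtx n) := by
  have h : Finite {l : List Bool // l.length = n} := (List.finite_length_eq Bool n).to_subtype
  exact Finite.of_injective (fun v : Vtx n => (⟨v.1, v.2.1⟩ : {l : List Bool // l.length = n}))
    (by intro a b hab; simp only [Subtype.mk.injEq] at hab; exact Subtype.ext hab)

lemma flip {m : List Bool} (h : RunConstrained m) (ht : true ∈ m) :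
    ∃ i, i < m.length ∧ m.getD i false = true ∧ RunConstrained (m.set i false) := by
  induction h with
  | nil => simp at ht
  | @zero l h ih =>
      have ht' : true ∈ l := by simpa using ht
      obtain ⟨i, hi, hg, hrc⟩ := ih ht'
      exact ⟨i + 1, by simpa using hi, by simpa using hg, by
        simpa using RunConstrained.zero hrc⟩
  | @block l r s hr hs h ih =>
      rcases r with _ | r'
      · omega
      refine ⟨0, by simp, ?_, ?_⟩
      · simp [List.replicate_succ]
      · have : (replicate (r'+1) true ++ replicate s false ++ l).set 0 false
            = false :: (replicate r' true ++ (replicate s false ++ l)) := by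
          simp [List.replicate_succ]
        rw [this]
        exact RunConstrained.zero (rc_block' r' s (by omega) h)

lemma reach_zero (v : Vtx n) : (fibRunGraph n).Reachable v (zeroV n) := by
  suffices H : ∀ k (l : List Bool) (hl : l.length = n)
      (hrc : RunConstrained (l ++ [false, false])), l.count true = k →
      (fibRunGraph n).Reachable ⟨l, hl, hrc⟩ (zeroV n) by
    obtain ⟨l, hl, hrc⟩ := v
    exact H _ l hl hrc rfl
  intro k
  induction k using Nat.strong_induction_on with
  | _ k ih =>
  intro l hl hrc hk
  rcases Nat.eq_zero_or_pos k with hk0 | hkpos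
  · subst hk0
    have hlz : l = replicate n false := by
      rw [List.eq_replicate_iff]
      refine ⟨hl, fun b hb => ?_⟩
      cases b
      · rfl
      · exact absurd (List.count_pos_iff.mpr hb) (by omega)
    have hv : (⟨l, hl, hrc⟩ : Vtx n) = zeroV n := Subtype.ext hlz
    rw [hv]
  · -- l has a true
    have htl : true ∈ l := by
      rw [← List.count_pos_iff]; omega
    have htm : true ∈ l ++ [false, false] := List.mem_append_left _ htl
    obtain ⟨i, hi, hg, hrc'⟩ := flip hrc htm
    have hil : i < l.length := by
      by_contra hc
      push_neg at hc
      rw [List.getD_eq_getElem?_getD, List.getElem?_append_right hc] at hg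
      have h2 : i - l.length < 2 := by simp at hi; omega
      interval_cases h : (i - l.length) <;> simp_all
    have hset : (l ++ [false, false]).set i false = l.set i false ++ [false, false] :=
      List.set_append_left _ _ hil
    rw [hset] at hrc'
    have hgl : l.getD i false = true := by
      rwa [List.getD_eq_getElem?_getD, List.getElem?_append_left hil,
        ← List.getD_eq_getElem?_getD] at hg
    obtain ⟨hham, hcount⟩ := ham_set l i hil hgl
    set l' : List Bool := l.set i false with hl'def
    have hlen' : l'.length = n := by simp [hl'def, hl]
    have hne : l ≠ l' := by
      intro he
      rw [← he] at hcount
      omega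
    have hadj : (fibRunGraph n).Adj ⟨l, hl, hrc⟩ ⟨l', hlen', hrc'⟩ := by
      rw [fibRunGraph, SimpleGraph.fromRel_adj]
      exact ⟨by simpa [Subtype.ext_iff] using hne, Or.inl hham⟩
    have hrec : (fibRunGraph n).Reachable ⟨l', hlen', hrc'⟩ (zeroV n) :=
      ih (l'.count true) (by omega) l' hlen' hrc' rfl
    exact (hadj.reachable).trans hrec

lemma connected (n : ℕ) : (fibRunGraph n).Connected := by
  have : Nonempty (Vtx n) := ⟨zeroV n⟩
  exact ⟨fun u v => (reach_zero u).trans (reach_zero v).symm⟩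

lemma ham_le_walk {u v : Vtx n} (w : (fibRunGraph n).Walk u v) :
    hammingD u.1 v.1 ≤ w.length := by
  induction w with
  | nil => simp [ham_self]
  | @cons a b c h w ih =>
      have hab : hammingD a.1 b.1 = 1 := by
        rw [fibRunGraph, SimpleGraph.fromRel_adj] at h
        rcases h.2 with h1 | h1
        · exact h1
        · rw [ham_comm]; exact h1
      have := ham_triangle a.1 b.1 c.1 (by rw [a.2.1, b.2.1]) (by rw [b.2.1, c.2.1])
      simp only [SimpleGraph.Walk.length_cons]
      omega

/-! ### The witness strings -/

def chain : ℕ → ℕ → List Bool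
  | _, 0 => []
  | a, m+1 => replicate a true ++ replicate (a+1) false ++ chain (a+2) m

lemma len_chain : ∀ (m a : ℕ), (chain a m).length + m = 2*m*a + 2*m*m
  | 0, a => by simp [chain]
  | m+1, a => by
      have h := len_chain m (a+2)
      simp only [chain, List.length_append, List.length_replicate]
      nlinarith [h]

lemma rc_chain : ∀ (m a : ℕ) {t : List Bool}, 1 ≤ a → RunConstrained t →
    RunConstrained (chain a m ++ t)
  | 0, a, t, _, h => by simpa [chain] using h
  | m+1, a, t, ha, h => by
      have := RunConstrained.block (l := chain (a+2) m ++ t) a (a+1) ha (by omega)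
        (rc_chain m (a+2) (by omega) h)
      simpa [chain, List.append_assoc] using this

lemma rc_cochain : ∀ (m a s : ℕ) {t : List Bool}, RunConstrained t → a + 2*m < s →
    RunConstrained (replicate a true ++ ((chain (a+1) m).map (!·) ++ (replicate s false ++ t)))
  | 0, a, s, t, h, hs => by
      simpa [chain] using rc_block' a s (by omega) h
  | m+1, a, s, t, h, hs => by
      have := rc_cochain m (a+2) s h (by omega)
      have h2 := rc_block' a (a+1) (by omega) this
      simpa [chain, List.map_append, List.map_replicate, List.append_assoc] using h2

def mu (p : ℕ) : List Bool :=
  chain 1 (p+1) ++ (replicate (p+1) true ++ replicate p false)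

def nu (p : ℕ) : List Bool :=
  (chain 1 (p+1)).map (!·) ++ (replicate (p+1) false ++ replicate p false)

lemma len_chain1 (p : ℕ) : (chain 1 (p+1)).length = 2*p^2 + 5*p + 3 := by
  have h := len_chain (p+1) 1
  nlinarith [h]

lemma len_mu (p : ℕ) : (mu p).length = 2*p^2 + 7*p + 4 := by
  simp [mu, len_chain1]
  omega

lemma len_nu (p : ℕ) : (nu p).length = 2*p^2 + 7*p + 4 := by
  simp [nu, len_chain1]
  omega

lemma rc_mu (p : ℕ) : RunConstrained (mu p ++ [false, false]) := by
  have he : mu p ++ [false, false]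
      = chain 1 (p+1) ++ (replicate (p+1) true ++ (replicate (p+2) false ++ [])) := by
    rw [mu, List.append_assoc, List.append_assoc, List.append_nil]
    congr 2
    rw [show [false, false] = replicate 2 false from rfl, ← List.replicate_add]
  rw [he]
  exact rc_chain (p+1) 1 le_rfl (rc_block' (p+1) (p+2) (by omega) RunConstrained.nil)

lemma rc_nu (p : ℕ) : RunConstrained (nu p ++ [false, false]) := by
  have h1 : RunConstrained (false :: (replicate 2 true ++ ((chain 3 p).map (!·) ++
      (replicate (2*p+3) false ++ ([] : List Bool))))) :=
    RunConstrained.zero (rc_cochain p 2 (2*p+3) RunConstrained.nil (by omega))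
  have he : nu p ++ [false, false]
      = false :: (replicate 2 true ++ ((chain 3 p).map (!·) ++
      (replicate (2*p+3) false ++ ([] : List Bool)))) := by
    rw [nu, chain]
    simp only [List.map_append, List.map_replicate, Bool.not_true, Bool.not_false,
      List.append_assoc, List.append_nil]
    rw [show (replicate 1 false : List Bool) = [false] from rfl, List.singleton_append]
    congr 3
    rw [show [false, false] = replicate 2 false from rfl, ← List.replicate_add,
      ← List.replicate_add]
    congr 1
    omega
  rw [he]; exact h1

lemma zipbne_rep : ∀ k : ℕ, List.zipWith bne (replicate k true) (replicate k false)
    = replicate k true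
  | 0 => rfl
  | k+1 => by simp [List.replicate_succ, zipbne_rep k]

lemma zip_mu_nu (p : ℕ) : List.zipWith bne (mu p) (nu p)
    = replicate (2*p^2 + 6*p + 4) true ++ replicate p false := by
  rw [mu, nu, List.zipWith_append (by simp),
    List.zipWith_append (by simp), zipbne_not, zipbne_self, zipbne_rep,
    List.length_replicate, len_chain1]
  rw [← List.append_assoc, ← List.replicate_add]
  have h3 : 2*p^2 + 5*p + 3 + (p+1) = 2*p^2 + 6*p + 4 := by omega
  rw [h3]

end FibRunAux

open FibRunAux in
theorem stmt_11 (p n : ℕ) (h1 : 2 * p ^ 2 + 3 * p ≤ n) (h2 : n ≤ 2 * p ^ 2 + 7 * p + 4) :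
    n - p ≤ (fibRunGraph n).diam := by
  set L := 2*p^2 + 7*p + 4 with hL
  set d := L - n with hd
  have hdL : d ≤ L := by omega
  -- the two witness vertices
  have hAlen : ((mu p).drop d).length = n := by
    rw [List.length_drop, len_mu]; omega
  have hArc : RunConstrained ((mu p).drop d ++ [false, false]) := by
    have : (mu p).drop d ++ [false, false] = ((mu p) ++ [false, false]).drop d := by
      rw [List.drop_append, len_mu, show d - L = 0 by omega, List.drop_zero]
    rw [this]; exact rc_drop (rc_mu p) d
  have hBlen : ((nu p).drop d).length = n := by
    rw [List.length_drop, len_nu]; omega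
  have hBrc : RunConstrained ((nu p).drop d ++ [false, false]) := by
    have : (nu p).drop d ++ [false, false] = ((nu p) ++ [false, false]).drop d := by
      rw [List.drop_append, len_nu, show d - L = 0 by omega, List.drop_zero]
    rw [this]; exact rc_drop (rc_nu p) d
  set A : Vtx n := ⟨(mu p).drop d, hAlen, hArc⟩ with hA
  set B : Vtx n := ⟨(nu p).drop d, hBlen, hBrc⟩ with hB
  -- hamming lower bound
  have hham : n - p ≤ hammingD A.1 B.1 := by
    show n - p ≤ hammingD ((mu p).drop d) ((nu p).drop d)
    rw [hammingD, ← List.drop_zipWith, zip_mu_nu, List.drop_append,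
      List.drop_replicate, List.drop_replicate, List.count_append, List.count_replicate,
      List.count_replicate, List.length_replicate]
    simp
    omega
  -- distance lower bound
  have hconn := connected n
  obtain ⟨w, hw⟩ := hconn.exists_walk_length_eq_dist A B
  have hdist : n - p ≤ (fibRunGraph n).dist A B := by
    have := ham_le_walk w
    omega
  -- finite diameter
  have hne : (fibRunGraph n).ediam ≠ ⊤ := by
    have : Nonempty (Vtx n) := ⟨zeroV n⟩
    obtain ⟨u, v, huv⟩ := SimpleGraph.exists_edist_eq_ediam_of_finite (G := fibRunGraph n)
    rw [← huv]
    exact (SimpleGraph.edist_ne_top_iff_reachable).mpr (hconn u v)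
  exact le_trans hdist (SimpleGraph.dist_le_diam hne)
end

section
/- For every non-negative integer n, diam(R_n) ≥ n − ⌊√(1 + n/2) − 3/4⌋. -/
/-- alternating runs -/
def alt : Bool → List ℕ → List Bool
  | _, [] => []
  | b, k :: ks => List.replicate k b ++ alt (!b) ks

@[simp] lemma alt_nil (b : Bool) : alt b [] = [] := rfl
@[simp] lemma alt_cons (b : Bool) (k : ℕ) (ks : List ℕ) :
    alt b (k :: ks) = List.replicate k b ++ alt (!b) ks := rfl

@[simp] lemma alt_length : ∀ (l : List ℕ) (b : Bool), (alt b l).length = l.sum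
  | [], _ => rfl
  | k :: ks, b => by simp [alt_length ks]

@[simp] lemma alt_map_not : ∀ (l : List ℕ) (b : Bool), (alt b l).map not = alt (!b) l
  | [], _ => rfl
  | k :: ks, b => by simp [alt_map_not ks]

lemma alt_append : ∀ (l₁ l₂ : List ℕ) (b : Bool),
    alt b (l₁ ++ l₂) = alt b l₁ ++ alt (if l₁.length % 2 = 0 then b else !b) l₂
  | [], l₂, b => by simp
  | k :: ks, l₂, b => by
    have h := alt_append ks l₂ (!b)
    rcases Nat.even_or_odd ks.length with he | ho
    · have h0 : ks.length % 2 = 0 := Nat.even_iff.mp he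
      have h1 : (k :: ks).length % 2 = 1 := by simp [List.length_cons]; omega
      simp only [List.cons_append, alt_cons, h, h0, h1, if_pos, if_neg, List.append_assoc]
      simp [h0, h1]
    · have h0 : ks.length % 2 = 1 := Nat.odd_iff.mp ho
      have h1 : (k :: ks).length % 2 = 0 := by simp [List.length_cons]; omega
      simp only [List.cons_append, alt_cons, h, List.append_assoc]
      rw [if_neg (by omega), if_pos (by simpa using h1), Bool.not_not]

inductive AltOK : List ℕ → Prop
  | nil : AltOK []
  | cons {r s : ℕ} {l : List ℕ} : 1 ≤ r → r < s → AltOK l → AltOK (r :: s :: l)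

lemma rc_reps (l : List Bool) (h : RunConstrained l) : ∀ m, RunConstrained (List.replicate m false ++ l)
  | 0 => h
  | m + 1 => by
    rw [List.replicate_succ, List.cons_append]
    exact (rc_reps l h m).zero

lemma rc_alt {l : List ℕ} (h : AltOK l) : RunConstrained (alt true l) := by
  induction h with
  | nil => exact .nil
  | @cons r s' l' h1 h2 _ ih =>
    have := RunConstrained.block r s' h1 h2 ih
    simpa [List.append_assoc] using this

lemma altok_append {l₁ l₂ : List ℕ} (h₁ : AltOK l₁) (h₂ : AltOK l₂) : AltOK (l₁ ++ l₂) := by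
  induction h₁ with
  | nil => simpa
  | cons a b _ ih => exact .cons a b ih

lemma altok_of_chain : ∀ (l : List ℕ), l.Chain' (· < ·) → (∀ x ∈ l, 1 ≤ x) →
    l.length % 2 = 0 → AltOK l
  | [], _, _, _ => .nil
  | [a], _, _, hp => by simp at hp
  | a :: b :: l, hc, h1, hp => by
    have hab : a < b := (List.isChain_cons_cons.mp hc).1
    have hc2 : l.Chain' (· < ·) := ((List.isChain_cons_cons.mp hc).2).tail
    refine AltOK.cons (h1 a (by simp)) hab (altok_of_chain l hc2 ?_ ?_)
    · exact fun x hx => h1 x (by simp [hx])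
    · simp only [List.length_cons] at hp; omega

lemma count_reps_true (n : ℕ) : List.count true (List.replicate n false) = 0 := by
  rw [List.count_replicate]; rfl

lemma hammingD_append (a b c d : List Bool) (h : a.length = b.length) :
    hammingD (a ++ c) (b ++ d) = hammingD a b + hammingD c d := by
  unfold hammingD
  rw [List.zipWith_append h, List.count_append]

lemma zipWith_bne_self : ∀ a : List Bool, List.zipWith bne a a = List.replicate a.length false
  | [] => rfl
  | x :: a => by simp [zipWith_bne_self a, List.replicate_succ]

@[simp] lemma hammingD_self (a : List Bool) : hammingD a a = 0 := by
  unfold hammingD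
  rw [zipWith_bne_self, count_reps_true]

@[simp] lemma hammingD_not : ∀ a : List Bool, hammingD a (a.map not) = a.length
  | [] => rfl
  | x :: a => by
    have := hammingD_not a
    unfold hammingD at *
    cases x <;> simp [List.count_cons, this]

lemma hammingD_comm (a b : List Bool) : hammingD a b = hammingD b a := by
  unfold hammingD
  rw [List.zipWith_comm_of_comm]
  intro x y; cases x <;> cases y <;> rfl

lemma hammingD_triangle : ∀ (a b c : List Bool), a.length = b.length → b.length = c.length →
    hammingD a c ≤ hammingD a b + hammingD b c
  | [], [], [], _, _ => by simp
  | x :: a, y :: b, z :: c, h1, h2 => by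
    have ih := hammingD_triangle a b c (by simpa using h1) (by simpa using h2)
    unfold hammingD at *
    simp only [List.zipWith_cons_cons, List.count_cons] at *
    cases x <;> cases y <;> cases z <;> simp <;> omega

lemma rc_flip : ∀ {x : List Bool}, RunConstrained x → ∀ a b, x = a ++ true :: b →
    (∀ y ∈ a, y = false) → RunConstrained (a ++ false :: b) := by
  intro x hx
  induction hx with
  | nil => intro a b h _; exact absurd h (by simp)
  | zero hl ih =>
    intro a b h hall
    rcases a with _ | ⟨y, a'⟩
    · simp at h
    · rw [List.cons_append] at h
      obtain ⟨hy, hl'⟩ := List.cons.inj h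
      have := ih a' b hl' (fun z hz => hall z (by simp [hz]))
      rw [List.cons_append, ← hy]
      exact this.zero
  | @block l r s hr hs hl ih =>
    intro a b h hall
    obtain ⟨r', rfl⟩ : ∃ r', r = r' + 1 := ⟨r - 1, by omega⟩
    rcases a with _ | ⟨y, a'⟩
    · simp only [List.replicate_succ, List.nil_append, List.cons_append, List.append_assoc] at h ⊢
      obtain ⟨-, hb⟩ := List.cons.inj h
      rcases Nat.eq_zero_or_pos r' with rfl | hr'
      · simp only [List.replicate_zero, List.nil_append] at hb
        subst hb
        have := rc_reps l hl (s + 1)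
        simpa [List.replicate_succ, List.append_assoc] using this
      · subst hb
        have := (RunConstrained.block r' s (by omega) (by omega) hl).zero
        simpa [List.append_assoc] using this
    · rw [List.cons_append] at h
      have hy : true = y :=
        (List.cons.inj (by simpa [List.replicate_succ, List.append_assoc] using h.symm)).1
      have := hall y (by simp)
      rw [← hy] at this; exact absurd this (by simp)

lemma first_true : ∀ w : List Bool, true ∈ w →
    ∃ a b, w = a ++ true :: b ∧ ∀ y ∈ a, y = false
  | [], h => absurd h (by simp)
  | x :: t, h => by
    cases x
    · have ht : true ∈ t := by simpa using h
      obtain ⟨a, b, hab, hall⟩ := first_true t ht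
      refine ⟨false :: a, b, by simp [hab], ?_⟩
      rintro y hy
      rcases List.mem_cons.mp hy with rfl | hy'
      · rfl
      · exact hall y hy'
    · exact ⟨[], t, by simp, by simp⟩


lemma flip_exists (w : List Bool) (h : RunConstrained (w ++ [false, false]))
    (hc : 0 < w.count true) :
    ∃ w', RunConstrained (w' ++ [false, false]) ∧ w'.length = w.length ∧
      w'.count true + 1 = w.count true ∧ hammingD w w' = 1 := by
  have hmem : true ∈ w := List.count_pos_iff.mp hc
  obtain ⟨a, b, rfl, hall⟩ := first_true w hmem
  refine ⟨a ++ false :: b, ?_, by simp, ?_, ?_⟩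
  · have := rc_flip h a (b ++ [false, false]) (by simp) hall
    simpa using this
  · simp [List.count_append, List.count_cons]; omega
  · rw [hammingD_append a a _ _ rfl]
    unfold hammingD
    simp [List.count_cons, zipWith_bne_self, count_reps_true]

def runL (a k : ℕ) : List ℕ := (List.range k).map (a + ·)

lemma runL_cons (a k : ℕ) : runL a (k + 1) = a :: runL (a + 1) k := by
  unfold runL
  rw [List.range_succ_eq_map]
  simp [Function.comp_def, Nat.add_comm, Nat.add_assoc, Nat.add_left_comm]

@[simp] lemma runL_zero (a : ℕ) : runL a 0 = [] := rfl

@[simp] lemma runL_len (a k : ℕ) : (runL a k).length = k := by simp [runL]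

lemma runL_mem {a k x : ℕ} (h : x ∈ runL a k) : a ≤ x ∧ x < a + k := by
  simp only [runL, List.mem_map, List.mem_range] at h
  obtain ⟨j, hj, rfl⟩ := h
  omega

lemma runL_sum : ∀ (k a : ℕ), (runL a k).sum * 2 + k = 2 * a * k + k * k
  | 0, a => by simp
  | k + 1, a => by
    have ih := runL_sum k (a + 1)
    rw [runL_cons]
    simp only [List.sum_cons]
    zify at ih ⊢
    linear_combination ih

lemma runL_getLast_lt : ∀ (k a : ℕ), ∀ x ∈ (runL a k).getLast?, x < a + k
  | 0, a => by simp
  | 1, a => by simp [runL_cons]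
  | k + 2, a => by
    intro x hx
    rw [runL_cons, runL_cons] at hx
    rw [List.getLast?_cons_cons] at hx
    have := runL_getLast_lt (k + 1) (a + 1) x (by rwa [runL_cons])
    omega

lemma chain_runL_append (a k : ℕ) (l : List ℕ) (hl : l.Chain' (· < ·))
    (hh : ∀ y ∈ l.head?, a + k ≤ y) : (runL a k ++ l).Chain' (· < ·) := by
  induction k generalizing a with
  | zero => simpa
  | succ k ih =>
    rw [runL_cons, List.cons_append]
    change List.IsChain _ _
    rw [List.isChain_cons]
    constructor
    · intro y hy
      rcases k with _ | k
      · simp only [runL_zero, List.nil_append] at hy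
        have := hh y hy; omega
      · rw [runL_cons, List.cons_append, List.head?_cons] at hy
        simp at hy; omega
    · exact ih (a + 1) (fun y hy => by have := hh y hy; omega)

lemma alt_append_even (l₁ l₂ : List ℕ) (b : Bool) (h : l₁.length % 2 = 0) :
    alt b (l₁ ++ l₂) = alt b l₁ ++ alt b l₂ := by
  rw [alt_append, if_pos h]

lemma alt_append_odd (l₁ l₂ : List ℕ) (b : Bool) (h : l₁.length % 2 = 1) :
    alt b (l₁ ++ l₂) = alt b l₁ ++ alt (!b) l₂ := by
  rw [alt_append, if_neg (by omega)]

lemma shapeA (C : List ℕ) (p w : ℕ)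
    (hch : (C ++ [w + p + 2]).Chain' (· < ·))
    (h1 : ∀ x ∈ C, 1 ≤ x) (hw1 : 1 ≤ w) (hw2 : w < p + 2)
    (hev : C.length % 2 = 0) :
    ∃ u v : List Bool, u.length = C.sum + w + p ∧ v.length = C.sum + w + p ∧
      RunConstrained (u ++ [false, false]) ∧ RunConstrained (v ++ [false, false]) ∧
      hammingD u v = C.sum + w := by
  have hrep2 : List.replicate p false ++ [false, false] = List.replicate (p + 2) false := by
    rw [show p + 2 = p + 2 from rfl, List.replicate_add]; rfl
  have hCch : C.Chain' (· < ·) := (List.isChain_append.mp hch).1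
  refine ⟨alt true (C ++ [w]) ++ List.replicate p false,
      (alt true (C ++ [w])).map not ++ List.replicate p false, ?_, ?_, ?_, ?_, ?_⟩
  · simp [List.sum_append]
  · simp [List.sum_append]
  · have heq : alt true (C ++ [w]) ++ List.replicate p false ++ [false, false]
        = alt true (C ++ [w, p + 2]) := by
      rw [alt_append_even C [w] true hev, alt_append_even C [w, p+2] true hev]
      simp only [alt_cons, alt_nil, List.append_nil, Bool.not_true, List.append_assoc]
      rw [hrep2]
    rw [heq]
    apply rc_alt
    exact altok_append (altok_of_chain C hCch h1 hev)
      (AltOK.cons hw1 (by omega) AltOK.nil)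
  · rw [alt_map_not]
    rcases C with _ | ⟨c, C'⟩
    · have heq : alt (!true) ([] ++ [w]) ++ List.replicate p false ++ [false, false]
          = List.replicate (w + (p + 2)) false ++ [] := by
        simp only [List.nil_append, alt_cons, alt_nil, Bool.not_true, List.append_nil,
          List.append_assoc]
        rw [hrep2, ← List.replicate_add]
      rw [heq]
      exact rc_reps [] RunConstrained.nil (w + (p + 2))
    · have hodd : C'.length % 2 = 1 := by simp at hev; omega
      have heq : alt (!true) ((c :: C') ++ [w]) ++ List.replicate p false ++ [false, false]
          = List.replicate c false ++ alt true (C' ++ [w + p + 2]) := by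
        simp only [List.cons_append, alt_cons, Bool.not_true, Bool.not_false]
        rw [alt_append_odd C' [w] true hodd, alt_append_odd C' [w + p + 2] true hodd]
        simp only [alt_cons, alt_nil, List.append_nil, Bool.not_true, List.append_assoc]
        rw [hrep2, ← List.replicate_add]
        rfl
      rw [heq]
      apply rc_reps
      apply rc_alt
      apply altok_of_chain
      · have := hch.tail
        exact this
      · intro x hx
        rcases List.mem_append.mp hx with hx' | hx'
        · exact h1 x (by simp [hx'])
        · simp at hx'; omega
      · simp; omega
  · rw [hammingD_append _ _ _ _ (by simp)]
    rw [hammingD_not, hammingD_self, alt_length]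
    simp [List.sum_append]

lemma shapeB (C : List ℕ) (p w : ℕ)
    (hch : (C ++ [w + p + 2]).Chain' (· < ·))
    (h1 : ∀ x ∈ C, 1 ≤ x) (hw1 : 1 ≤ w) (hw2 : w < p + 2)
    (hod : C.length % 2 = 1) :
    ∃ u v : List Bool, u.length = C.sum + w + p ∧ v.length = C.sum + w + p ∧
      RunConstrained (u ++ [false, false]) ∧ RunConstrained (v ++ [false, false]) ∧
      hammingD u v = C.sum + w := by
  have hrep2 : List.replicate p false ++ [false, false] = List.replicate (p + 2) false := by
    rw [show p + 2 = p + 2 from rfl, List.replicate_add]; rfl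
  have hCch : C.Chain' (· < ·) := (List.isChain_append.mp hch).1
  refine ⟨alt true (C ++ [w]) ++ List.replicate p false,
      (alt true (C ++ [w])).map not ++ List.replicate p false, ?_, ?_, ?_, ?_, ?_⟩
  · simp [List.sum_append]
  · simp [List.sum_append]
  · have heq : alt true (C ++ [w]) ++ List.replicate p false ++ [false, false]
        = alt true (C ++ [w + p + 2]) := by
      rw [alt_append_odd C [w] true hod, alt_append_odd C [w + p + 2] true hod]
      simp only [alt_cons, alt_nil, List.append_nil, Bool.not_true, List.append_assoc]
      rw [hrep2, ← List.replicate_add]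
      rfl
    rw [heq]
    apply rc_alt
    apply altok_of_chain _ hch
    · intro x hx
      rcases List.mem_append.mp hx with hx' | hx'
      · exact h1 x hx'
      · simp at hx'; omega
    · simp; omega
  · rw [alt_map_not]
    rcases C with _ | ⟨c, C'⟩
    · simp at hod
    · have hevC' : C'.length % 2 = 0 := by simp at hod; omega
      have heq : alt (!true) ((c :: C') ++ [w]) ++ List.replicate p false ++ [false, false]
          = List.replicate c false ++ alt true (C' ++ [w, p + 2]) := by
        simp only [List.cons_append, alt_cons, Bool.not_true, Bool.not_false]
        rw [alt_append_even C' [w] true hevC', alt_append_even C' [w, p + 2] true hevC']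
        simp only [alt_cons, alt_nil, List.append_nil, Bool.not_true, List.append_assoc]
        rw [hrep2]
      rw [heq]
      apply rc_reps
      apply rc_alt
      refine altok_append (altok_of_chain C' ?_ ?_ hevC')
        (AltOK.cons hw1 (by omega) AltOK.nil)
      · exact (List.isChain_cons.mp hCch).2
      · exact fun x hx => h1 x (by simp [hx])
  · rw [hammingD_append _ _ _ _ (by simp)]
    rw [hammingD_not, hammingD_self, alt_length]
    simp [List.sum_append]

lemma caseS1 (p q m e n : ℕ) (hq : q ≤ 1) (hpq : 1 ≤ p + q) (hme : m + e = 2 * p)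
    (hn : n = 2 * p ^ 2 + 3 * p + 2 * p * q + e + q) :
    ∃ u v : List Bool, u.length = n ∧ v.length = n ∧
      RunConstrained (u ++ [false, false]) ∧ RunConstrained (v ++ [false, false]) ∧
      n ≤ hammingD u v + p := by
  set C := runL (1 + q) m ++ runL (m + 2 + q) e with hC
  have hch : (C ++ [(p + q) + p + 2]).Chain' (· < ·) := by
    rw [hC, List.append_assoc]
    apply chain_runL_append
    · apply chain_runL_append
      · exact List.isChain_singleton _
      · intro y hy
        simp only [List.head?_cons, Option.mem_def, Option.some.injEq] at hy
        omega
    · intro y hy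
      rcases e with _ | e
      · simp only [runL_zero, List.nil_append, List.head?_cons, Option.mem_def,
          Option.some.injEq] at hy
        omega
      · rw [runL_cons, List.cons_append, List.head?_cons] at hy
        simp only [Option.mem_def, Option.some.injEq] at hy
        omega
  have h1 : ∀ x ∈ C, 1 ≤ x := by
    intro x hx
    rcases List.mem_append.mp hx with h | h <;> have := runL_mem h <;> omega
  have hev : C.length % 2 = 0 := by
    simp only [hC, List.length_append, runL_len]
    omega
  obtain ⟨u, v, hu, hv, hru, hrv, hham⟩ :=
    shapeA C p (p + q) hch h1 (by omega) (by omega) hev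
  have hs1 := runL_sum m (1 + q)
  have hs2 := runL_sum e (m + 2 + q)
  have hCs : C.sum = (runL (1 + q) m).sum + (runL (m + 2 + q) e).sum := by
    simp [hC, List.sum_append]
  have key2 : (C.sum + (p + q) + p) * 2 = n * 2 := by
    rw [hCs]
    zify at hs1 hs2 hme hn ⊢
    linear_combination hs1 + hs2 + ((m : ℤ) + e + 2 * p + 1 + 2 * q) * hme - 2 * hn
  have key : C.sum + (p + q) + p = n := by omega
  exact ⟨u, v, by omega, by omega, hru, hrv, by omega⟩

lemma caseR2 (p n : ℕ) (hn : n = 2 * p ^ 2 + 7 * p + 2) :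
    ∃ u v : List Bool, u.length = n ∧ v.length = n ∧
      RunConstrained (u ++ [false, false]) ∧ RunConstrained (v ++ [false, false]) ∧
      n ≤ hammingD u v + p := by
  set C := 1 :: runL 3 (2 * p) with hC
  have hch : (C ++ [(p + 1) + p + 2]).Chain' (· < ·) := by
    rw [hC, List.cons_append]
    change List.IsChain _ _
    rw [List.isChain_cons]
    constructor
    · intro y hy
      rcases hp : 2 * p with _ | k
      · rw [hp] at hy
        simp only [runL_zero, List.nil_append, List.head?_cons, Option.mem_def,
          Option.some.injEq] at hy
        omega
      · rw [hp, runL_cons, List.cons_append, List.head?_cons] at hy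
        simp only [Option.mem_def, Option.some.injEq] at hy
        omega
    · apply chain_runL_append
      · exact List.isChain_singleton _
      · intro y hy
        simp only [List.head?_cons, Option.mem_def, Option.some.injEq] at hy
        omega
  have h1 : ∀ x ∈ C, 1 ≤ x := by
    intro x hx
    rcases List.mem_cons.mp hx with rfl | h
    · omega
    · have := runL_mem h; omega
  have hod : C.length % 2 = 1 := by simp only [hC, runL_len, List.length_cons]; omega
  obtain ⟨u, v, hu, hv, hru, hrv, hham⟩ :=
    shapeB C p (p + 1) hch h1 (by omega) (by omega) hod
  have hs := runL_sum (2 * p) 3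
  have hCs : C.sum = 1 + (runL 3 (2 * p)).sum := by simp [hC]
  have key2 : (C.sum + (p + 1) + p) * 2 = n * 2 := by
    rw [hCs]
    zify at hs hn ⊢
    linear_combination hs - 2 * hn
  exact ⟨u, v, by omega, by omega, hru, hrv, by omega⟩

lemma caseR3 (p n : ℕ) (hn : n = 2 * p ^ 2 + 7 * p + 3) :
    ∃ u v : List Bool, u.length = n ∧ v.length = n ∧
      RunConstrained (u ++ [false, false]) ∧ RunConstrained (v ++ [false, false]) ∧
      n ≤ hammingD u v + p := by
  set C := runL 2 (2 * p + 1) with hC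
  have hch : (C ++ [(p + 1) + p + 2]).Chain' (· < ·) := by
    rw [hC]
    apply chain_runL_append
    · exact List.isChain_singleton _
    · intro y hy
      simp only [List.head?_cons, Option.mem_def, Option.some.injEq] at hy
      omega
  have h1 : ∀ x ∈ C, 1 ≤ x := by
    intro x hx; have := runL_mem hx; omega
  have hod : C.length % 2 = 1 := by simp only [hC, runL_len, List.length_cons]; omega
  obtain ⟨u, v, hu, hv, hru, hrv, hham⟩ :=
    shapeB C p (p + 1) hch h1 (by omega) (by omega) hod
  have hs := runL_sum (2 * p + 1) 2
  have key2 : (C.sum + (p + 1) + p) * 2 = n * 2 := by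
    rw [hC]
    zify at hs hn ⊢
    linear_combination hs - 2 * hn
  exact ⟨u, v, by omega, by omega, hru, hrv, by omega⟩

lemma caseR4 (p n : ℕ) (hn : n = 2 * p ^ 2 + 7 * p + 4) :
    ∃ u v : List Bool, u.length = n ∧ v.length = n ∧
      RunConstrained (u ++ [false, false]) ∧ RunConstrained (v ++ [false, false]) ∧
      n ≤ hammingD u v + p := by
  set C := runL 1 (2 * p + 2) with hC
  have hch : (C ++ [(p + 1) + p + 2]).Chain' (· < ·) := by
    rw [hC]
    apply chain_runL_append
    · exact List.isChain_singleton _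
    · intro y hy
      simp only [List.head?_cons, Option.mem_def, Option.some.injEq] at hy
      omega
  have h1 : ∀ x ∈ C, 1 ≤ x := by
    intro x hx; have := runL_mem hx; omega
  have hev : C.length % 2 = 0 := by simp only [hC, runL_len]; omega
  obtain ⟨u, v, hu, hv, hru, hrv, hham⟩ :=
    shapeA C p (p + 1) hch h1 (by omega) (by omega) hev
  have hs := runL_sum (2 * p + 2) 1
  have key2 : (C.sum + (p + 1) + p) * 2 = n * 2 := by
    rw [hC]
    zify at hs hn ⊢
    linear_combination hs - 2 * hn
  exact ⟨u, v, by omega, by omega, hru, hrv, by omega⟩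

lemma exists_pair (n p : ℕ) (hp1 : 2 * p ^ 2 + 3 * p ≤ n) (hp2 : n ≤ 2 * p ^ 2 + 7 * p + 4)
    (hn : 1 ≤ n) :
    ∃ u v : List Bool, u.length = n ∧ v.length = n ∧
      RunConstrained (u ++ [false, false]) ∧ RunConstrained (v ++ [false, false]) ∧
      n ≤ hammingD u v + p := by
  rcases le_or_gt n (2 * p ^ 2 + 5 * p) with h | h
  · have hp : 1 ≤ p := by nlinarith
    exact caseS1 p 0 (2 * p - (n - (2 * p ^ 2 + 3 * p))) (n - (2 * p ^ 2 + 3 * p)) n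
      (by omega) (by omega) (by omega) (by omega)
  · rcases le_or_gt n (2 * p ^ 2 + 7 * p + 1) with h' | h'
    · exact caseS1 p 1 (2 * p - (n - (2 * p ^ 2 + 5 * p + 1))) (n - (2 * p ^ 2 + 5 * p + 1)) n
        (by omega) (by omega) (by omega) (by omega)
    · rcases (by omega : n = 2 * p ^ 2 + 7 * p + 2 ∨ n = 2 * p ^ 2 + 7 * p + 3 ∨
          n = 2 * p ^ 2 + 7 * p + 4) with h2 | h3 | h4
      · exact caseR2 p n h2
      · exact caseR3 p n h3
      · exact caseR4 p n h4

abbrev FibV (n : ℕ) := {l : List Bool // l.length = n ∧ RunConstrained (l ++ [false, false])}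

lemma adj_ham {n : ℕ} {a b : FibV n} (h : (fibRunGraph n).Adj a b) :
    hammingD a.1 b.1 = 1 := by
  simp only [fibRunGraph, SimpleGraph.fromRel_adj] at h
  rcases h.2 with h' | h'
  · exact h'
  · rw [hammingD_comm]; exact h'

lemma walk_ham {n : ℕ} (a b : FibV n) (w : (fibRunGraph n).Walk a b) :
    hammingD a.1 b.1 ≤ w.length := by
  induction w with
  | nil => simp
  | @cons a x b hadj q ih =>
    have h1 := adj_ham hadj
    have htri := hammingD_triangle a.1 x.1 b.1 (by rw [a.2.1, x.2.1]) (by rw [x.2.1, b.2.1])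
    simp only [SimpleGraph.Walk.length_cons]
    omega

def zeroV (n : ℕ) : FibV n :=
  ⟨List.replicate n false, by simp, by
    have h := rc_reps [] RunConstrained.nil (n + 2)
    rw [List.append_nil] at h
    rwa [show List.replicate (n + 2) false = List.replicate n false ++ [false, false] by
      rw [List.replicate_add]; rfl] at h⟩

lemma reach_zero {n : ℕ} : ∀ (k : ℕ) (W : FibV n), W.1.count true ≤ k →
    (fibRunGraph n).Reachable W (zeroV n) := by
  intro k
  induction k with
  | zero =>
    intro W hW
    have h0 : W.1.count true = 0 := by omega
    have hall : ∀ b ∈ W.1, b = false := by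
      intro b hb
      cases b
      · rfl
      · exact absurd hb (List.count_eq_zero.mp h0)
    have : W = zeroV n := by
      apply Subtype.ext
      have := List.eq_replicate_iff.mpr ⟨W.2.1, hall⟩
      exact this
    rw [this]
  | succ k ih =>
    intro W hW
    by_cases hc : W.1.count true ≤ k
    · exact ih W hc
    · have hpos : 0 < W.1.count true := by omega
      obtain ⟨w', hrc', hlen', hcnt', hham'⟩ := flip_exists W.1 W.2.2 hpos
      have hWlen : w'.length = n := by rw [hlen', W.2.1]
      let W' : FibV n := ⟨w', hWlen, hrc'⟩
      have hne : W ≠ W' := by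
        intro hEq
        have : W.1 = w' := congrArg Subtype.val hEq
        rw [← this] at hham'
        rw [hammingD_self] at hham'
        exact absurd hham' (by norm_num)
      have hadj : (fibRunGraph n).Adj W W' := by
        simp only [fibRunGraph, SimpleGraph.fromRel_adj]
        exact ⟨hne, Or.inl hham'⟩
      refine hadj.reachable.trans (ih W' ?_)
      show w'.count true ≤ k
      omega

lemma fib_connected (n : ℕ) : (fibRunGraph n).Connected := by
  rw [SimpleGraph.connected_iff]
  refine ⟨fun a b => ?_, ⟨zeroV n⟩⟩
  exact (reach_zero _ a le_rfl).trans (reach_zero _ b le_rfl).symm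

instance fibFinite (n : ℕ) : Finite (FibV n) := by
  apply Finite.of_injective (fun x : FibV n => (fun i : Fin n => x.1.get (Fin.cast x.2.1.symm i)))
  intro x y h
  apply Subtype.ext
  apply List.ext_get (by rw [x.2.1, y.2.1])
  intro i h1 h2
  have := congrFun h ⟨i, by rw [← x.2.1]; exact h1⟩
  simpa [Fin.cast] using this

lemma fib_ediam_ne_top (n : ℕ) : (fibRunGraph n).ediam ≠ ⊤ := by
  have : Nonempty (FibV n) := ⟨zeroV n⟩
  obtain ⟨u, v, huv⟩ := SimpleGraph.exists_edist_eq_ediam_of_finite (G := fibRunGraph n)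
  rw [← huv]
  exact SimpleGraph.edist_ne_top_iff_reachable.mpr ((fib_connected n).preconnected u v)

theorem stmt_12 (n : ℕ) :
    (n : ℤ) - ⌊Real.sqrt (1 + (n : ℝ) / 2) - 3 / 4⌋ ≤ ((fibRunGraph n).diam : ℤ) := by
  have hcast : (0:ℝ) ≤ (n:ℝ) / 2 := by positivity
  have hsq1 : (1:ℝ) ≤ Real.sqrt (1 + (n:ℝ)/2) := by
    have h1 : Real.sqrt 1 ≤ Real.sqrt (1 + (n:ℝ)/2) := Real.sqrt_le_sqrt (by linarith)
    rwa [Real.sqrt_one] at h1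
  have hf0 : (0:ℤ) ≤ ⌊Real.sqrt (1 + (n:ℝ)/2) - 3/4⌋ := by
    apply Int.floor_nonneg.mpr
    linarith
  by_cases h0 : n = 0
  · subst h0
    have hd : (0:ℤ) ≤ ((fibRunGraph 0).diam : ℤ) := by positivity
    simp only [Nat.cast_zero] at hf0 ⊢
    omega
  · set p := Nat.findGreatest (fun p => 2 * p ^ 2 + 3 * p ≤ n) n with hpdef
    have hp1 : 2 * p ^ 2 + 3 * p ≤ n :=
      Nat.findGreatest_spec (P := fun p => 2 * p ^ 2 + 3 * p ≤ n) (Nat.zero_le n) (by simp)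
    have hp2 : n ≤ 2 * p ^ 2 + 7 * p + 4 := by
      by_contra hcon
      push_neg at hcon
      have hle : p + 1 ≤ n := by nlinarith
      have hP : 2 * (p + 1) ^ 2 + 3 * (p + 1) ≤ n := by nlinarith
      have := Nat.le_findGreatest (P := fun p => 2 * p ^ 2 + 3 * p ≤ n) hle hP
      omega
    obtain ⟨u, v, hul, hvl, hru, hrv, hham⟩ := exists_pair n p hp1 hp2 (by omega)
    have hreach : (fibRunGraph n).Reachable ⟨u, hul, hru⟩ ⟨v, hvl, hrv⟩ :=
      (fib_connected n).preconnected _ _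
    obtain ⟨wlk, hwlk⟩ := hreach.exists_walk_length_eq_dist
    have h1 : hammingD u v ≤ (fibRunGraph n).dist ⟨u, hul, hru⟩ ⟨v, hvl, hrv⟩ := by
      rw [← hwlk]
      exact walk_ham _ _ wlk
    have h2 : (fibRunGraph n).dist ⟨u, hul, hru⟩ ⟨v, hvl, hrv⟩ ≤ (fibRunGraph n).diam :=
      SimpleGraph.dist_le_diam (fib_ediam_ne_top n)
    have h3 : n ≤ (fibRunGraph n).diam + p := by omega
    have h4 : (p : ℤ) ≤ ⌊Real.sqrt (1 + (n:ℝ)/2) - 3/4⌋ := by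
      rw [Int.le_floor]
      have hc1 : (2 * (p:ℝ) ^ 2 + 3 * p) ≤ n := by exact_mod_cast hp1
      have hsqle : ((p:ℝ) + 3/4) ^ 2 ≤ 1 + (n:ℝ)/2 := by nlinarith
      have := (Real.le_sqrt (by positivity) (by linarith)).mpr hsqle
      push_cast
      linarith
    have h5 : (n : ℤ) ≤ ((fibRunGraph n).diam : ℤ) + p := by exact_mod_cast h3
    linarith
end
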